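/- Let K and F be algebraic extensions of a field L with at least one of K, F separable over L and one normal over L. Then K and F are linearly disjoint over L if and only if K ∩ F = L. -/

import Mathlib

/-!
If `F/L` is normal, every `σ ∈ Aut(Ω/K)` restricts to an automorphism of `F`, so it maps an
`F`-linear relation among elements of `K` to another one. A relation of minimal support with some
coefficient equal to `1` is therefore fixed by `Aut(Ω/K)`: its coefficients are purely inseparable
over `K`, and since they lie in `F` and `K ∩ F = L`, they are purely inseparable over `L`. If `F/L`
is separable they then lie in `L`; if `K/L` is separable, `L`-independent elements of `K` stay
independent over the perfect closure of `L`. Either way the relation is trivial. When `K/L` is the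
normal one, swap the roles of `K` and `F`: linear disjointness is symmetric.
-/

/-- `K` and `F` are linearly disjoint over `L` (inside a common extension `Ω`): every
finite subset of `K` that is `L`-linearly independent is also `F`-linearly independent. -/
def LinDisjoint (L : Type*) {Ω : Type*} [Field L] [Field Ω] [Algebra L Ω]
    (K F : IntermediateField L Ω) : Prop :=
  ∀ s : Finset Ω, (↑s : Set Ω) ⊆ (K : Set Ω) →
    LinearIndependent L (fun x : s => (x : Ω)) →
    LinearIndependent F (fun x : s => (x : Ω))

open IntermediateField

namespace Finsupp

variable {ι F V : Type*} [Field F] [AddCommGroup V] [Module F V] {v : ι → V}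

theorem exists_minimal_relation_of_not_linearIndependent (h : ¬LinearIndependent F v) :
    ∃ (l : ι →₀ F) (i : ι), linearCombination F v l = 0 ∧ l i = 1 ∧
      ∀ m : ι →₀ F, linearCombination F v m = 0 → m.support ⊂ l.support → m = 0 := by
  rw [linearIndependent_iff] at h
  push Not at h
  obtain ⟨l, ⟨hl, hl0⟩, hmin⟩ := (measure fun m : ι →₀ F => m.support.card).wf.has_min
    {m | linearCombination F v m = 0 ∧ m ≠ 0} h
  obtain ⟨i, hi⟩ := support_nonempty_iff.2 hl0
  have hli : l i ≠ 0 := mem_support_iff.1 hi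
  refine ⟨(l i)⁻¹ • l, i, by rw [map_smul, hl, smul_zero], inv_mul_cancel₀ hli, fun m hm hsub => ?_⟩
  rw [support_smul_eq (inv_ne_zero hli)] at hsub
  by_contra hm0
  exact hmin m ⟨hm, hm0⟩ (Finset.card_lt_card hsub)

theorem eq_of_minimal_relation {l m : ι →₀ F} {i : ι}
    (hmin : ∀ m : ι →₀ F, linearCombination F v m = 0 → m.support ⊂ l.support → m = 0)
    (hl : linearCombination F v l = 0) (hm : linearCombination F v m = 0)
    (hsub : m.support ⊆ l.support) (hli : l i = 1) (hmi : m i = 1) : m = l := by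
  classical
  have hsub' : (m - l).support ⊆ l.support := support_sub.trans (Finset.union_subset hsub le_rfl)
  refine sub_eq_zero.1 (hmin _ (by rw [map_sub, hm, hl, sub_zero]) ?_)
  exact (Finset.ssubset_iff_of_subset hsub').2 ⟨i, by simp [hli], by simp [hli, hmi]⟩

theorem eq_zero_of_linearCombination_eq_zero_of_forall_mem_range {E Ω : Type*} [Field E]
    [Field Ω] [Algebra E Ω] [Algebra F Ω] {v : ι → Ω} (hv : LinearIndependent E v)
    {l : ι →₀ F} (hl : linearCombination F v l = 0)
    (hrange : ∀ x, algebraMap F Ω (l x) ∈ (algebraMap E Ω).range) : l = 0 := by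
  choose g hg using hrange
  have hsum : ∑ x ∈ l.support, g x • v x = 0 := by
    rw [← hl, linearCombination_apply, Finsupp.sum]
    refine Finset.sum_congr rfl fun x _ => ?_
    rw [Algebra.smul_def, Algebra.smul_def, hg]
  ext x
  by_cases hx : x ∈ l.support
  · apply (algebraMap F Ω).injective
    rw [← hg, linearIndependent_iff'.1 hv _ _ hsum x hx, map_zero, coe_zero, Pi.zero_apply,
      map_zero]
  · exact notMem_support_iff.1 hx

end Finsupp

section Perfect

variable {L Ω : Type*} [Field L] [Field Ω] [Algebra L Ω]

theorem mem_perfectClosure_of_forall_algEquiv_apply_eq [IsAlgClosed Ω] [Algebra.IsAlgebraic L Ω]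
    {b : Ω} (hb : ∀ σ : Ω ≃ₐ[L] Ω, σ b = b) : b ∈ perfectClosure L Ω := by
  classical
  have : IsAlgClosure L Ω := ⟨‹_›, ‹_›⟩
  have hb_int : IsIntegral L b := Algebra.IsIntegral.isIntegral b
  have hroots : ((minpoly L b).aroots Ω).toFinset = {b} := by
    refine Finset.eq_singleton_iff_unique_mem.2 ⟨?_, fun y hy => ?_⟩
    · simp [minpoly.ne_zero hb_int]
    · obtain ⟨σ, rfl⟩ := ((isConjRoot_iff_mem_minpoly_aroots hb_int).2
        (Multiset.mem_toFinset.1 hy)).symm.exists_algEquiv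
      exact hb σ
  rw [mem_perfectClosure_iff_natSepDegree_eq_one, Polynomial.natSepDegree_eq_of_isAlgClosed Ω,
    hroots, Finset.card_singleton]

theorem mem_perfectClosure_of_inf_eq_bot {K F : IntermediateField L Ω} (h : K ⊓ F = ⊥) {x : Ω}
    (hxK : x ∈ perfectClosure K Ω) (hxF : x ∈ F) : x ∈ perfectClosure L Ω := by
  obtain ⟨q, _⟩ := ExpChar.exists L
  have : ExpChar K q := expChar_of_injective_algebraMap (algebraMap L K).injective q
  obtain ⟨n, c, hc⟩ := (mem_perfectClosure_iff_pow_mem q).1 hxK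
  have hmem : x ^ q ^ n ∈ K ⊓ F := ⟨hc ▸ c.2, pow_mem hxF _⟩
  rw [h, mem_bot] at hmem
  exact (mem_perfectClosure_iff_pow_mem q).2 ⟨n, hmem⟩

end Perfect

section LinearDisjoint

variable {L Ω : Type*} [Field L] [Field Ω] [Algebra L Ω] {K F : IntermediateField L Ω}

theorem linDisjoint_iff_linearDisjoint : LinDisjoint L K F ↔ K.LinearDisjoint F := by
  refine ⟨fun H => ?_, fun H s hsK hs => ?_⟩
  · let b := Module.Basis.ofVectorSpace L K
    have hinj : Function.Injective (K.val ∘ b) := K.val.injective.comp b.injective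
    have hb : LinearIndepOn L id (Set.range (K.val ∘ b)) := (linearIndepOn_id_range_iff hinj).2 <|
      b.linearIndependent.map' K.val.toLinearMap (LinearMap.ker_eq_bot_of_injective K.val.injective)
    refine .of_basis_left b <| (linearIndepOn_id_range_iff hinj).1 <|
      linearIndepOn_of_finite _ fun t ht htfin => ?_
    rw [← htfin.coe_toFinset] at ht ⊢
    exact H _ (ht.trans (Set.range_subset_iff.2 fun i => (b i).2)) (hb.mono ht)
  · exact H.linearIndependent_left (a := fun x : s => ⟨x, hsK x.2⟩)
      (hs.of_comp K.val.toLinearMap)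

theorem linearCombination_mapRange_restrictNormal [Normal L F] {ι : Type*} {v : ι → Ω}
    (hvK : ∀ i, v i ∈ K) (σ : Ω ≃ₐ[K] Ω) (l : ι →₀ F) :
    Finsupp.linearCombination F v
        (l.mapRange ((σ.restrictScalars L).restrictNormal F) (map_zero _)) =
      σ (Finsupp.linearCombination F v l) := by
  rw [Finsupp.linearCombination_apply, Finsupp.linearCombination_apply,
    Finsupp.sum_mapRange_index fun i => zero_smul F (v i), map_finsuppSum]
  refine Finsupp.sum_congr fun i _ => ?_
  rw [Algebra.smul_def, Algebra.smul_def, map_mul, AlgEquiv.restrictNormal_commutes]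
  exact congrArg _ (σ.commutes ⟨v i, hvK i⟩).symm

theorem algEquiv_apply_eq_of_minimal_relation [Normal L F] {ι : Type*} {v : ι → Ω}
    (hvK : ∀ i, v i ∈ K) {l : ι →₀ F} {i : ι} (hl : Finsupp.linearCombination F v l = 0)
    (hli : l i = 1)
    (hmin : ∀ m : ι →₀ F, Finsupp.linearCombination F v m = 0 → m.support ⊂ l.support → m = 0)
    (σ : Ω ≃ₐ[K] Ω) (x : ι) : σ (l x) = l x := by
  set τ := (σ.restrictScalars L).restrictNormal F
  have hτl : l.mapRange τ (map_zero τ) = l :=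
    Finsupp.eq_of_minimal_relation hmin hl
      (by rw [linearCombination_mapRange_restrictNormal hvK, hl, map_zero])
      Finsupp.support_mapRange hli (by simp [hli])
  calc σ (l x) = τ (l x) := (AlgEquiv.restrictNormal_commutes (σ.restrictScalars L) F (l x)).symm
    _ = l x := by rw [← Finsupp.mapRange_apply (hf := map_zero τ), hτl]

variable [IsAlgClosed Ω] [Algebra.IsAlgebraic L Ω]

theorem linearIndependent_of_inf_eq_bot_of_normal [Normal L F] (h : K ⊓ F = ⊥)
    (hsep : Algebra.IsSeparable L K ∨ Algebra.IsSeparable L F) {ι : Type*} {v : ι → Ω}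
    (hvK : ∀ i, v i ∈ K) (hv : LinearIndependent L v) : LinearIndependent F v := by
  by_contra hdep
  obtain ⟨l, i, hl, hli, hmin⟩ := Finsupp.exists_minimal_relation_of_not_linearIndependent hdep
  have hP : ∀ x, (l x : Ω) ∈ perfectClosure L Ω := fun x =>
    mem_perfectClosure_of_inf_eq_bot h (mem_perfectClosure_of_forall_algEquiv_apply_eq
      (algEquiv_apply_eq_of_minimal_relation hvK hl hli hmin · x)) (l x).2
  suffices l = 0 by simp [this] at hli
  rcases hsep with hK | hF
  · have hvsep : ∀ i, IsSeparable L (v i) := fun i =>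
      mem_separableClosure_iff.1 ((le_separableClosure_iff L Ω K).2 hK (hvK i))
    exact Finsupp.eq_zero_of_linearCombination_eq_zero_of_forall_mem_range
      (hv.map_of_isPurelyInseparable_of_isSeparable (perfectClosure L Ω) hvsep) hl
      fun x => ⟨⟨_, hP x⟩, rfl⟩
  · refine Finsupp.eq_zero_of_linearCombination_eq_zero_of_forall_mem_range hv hl fun x => ?_
    have hx : (l x : Ω) ∈ separableClosure L Ω ⊓ perfectClosure L Ω :=
      ⟨(le_separableClosure_iff L Ω F).2 hF (l x).2, hP x⟩
    rw [separableClosure_inf_perfectClosure, mem_bot] at hx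
    exact hx

theorem linearDisjoint_of_inf_eq_bot_of_normal [Normal L F] (h : K ⊓ F = ⊥)
    (hsep : Algebra.IsSeparable L K ∨ Algebra.IsSeparable L F) : K.LinearDisjoint F :=
  let b := Module.Basis.ofVectorSpace L K
  .of_basis_left b <| linearIndependent_of_inf_eq_bot_of_normal h hsep (fun i => (b i).2) <|
    b.linearIndependent.map' K.val.toLinearMap (LinearMap.ker_eq_bot_of_injective K.val.injective)

end LinearDisjoint

/-- Let `K` and `F` be algebraic extensions of `L` (inside an algebraic closure of `L`),
at least one of them separable over `L` and one of them normal over `L`. Then `K` and `F`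
are linearly disjoint over `L` if and only if `K ∩ F = L`. -/
theorem linDisjoint_iff_inf_eq_bot (L : Type*) [Field L]
    (K F : IntermediateField L (AlgebraicClosure L))
    (hsep : Algebra.IsSeparable L K ∨ Algebra.IsSeparable L F)
    (hnormal : Normal L K ∨ Normal L F) :
    LinDisjoint L K F ↔ K ⊓ F = ⊥ := by
  rw [linDisjoint_iff_linearDisjoint]
  refine ⟨LinearDisjoint.inf_eq_bot, fun h => ?_⟩
  rcases hnormal with hK | hF
  · exact (linearDisjoint_of_inf_eq_bot_of_normal (inf_comm K F ▸ h) hsep.symm).symm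
  · exact linearDisjoint_of_inf_eq_bot_of_normal h hsep
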